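/- arXiv:2601.13030 — 3 statements merged into one kernel-verified Lean document; each statement's English description precedes it below -/
import Mathlib

section
/- Let θ be a match on {0, ..., l} with l ≥ 1 and θ(0) = k < l. Then θ restricted to {0,...,k} is a match on {0,...,k} and θ restricted to {k+1,...,l} is a match on {k+1,...,l}. -/
/-- A match on `{m, ..., n}`: an involution of the interval with no crossing, i.e.
there are no `i < j < θ i < θ j` within the interval. -/
def IsMatch (m n : ℕ) (θ : ℕ → ℕ) : Prop :=
  (∀ i, m ≤ i → i ≤ n → m ≤ θ i ∧ θ i ≤ n) ∧
  (∀ i, m ≤ i → i ≤ n → θ (θ i) = i) ∧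
  (¬ ∃ i j, m ≤ i ∧ i < j ∧ j ≤ n ∧ j < θ i ∧ θ i < θ j)

namespace IsMatch

variable {m n : ℕ} {θ : ℕ → ℕ}

theorem restrict {a b : ℕ} (hθ : IsMatch m n θ) (hma : m ≤ a) (hbn : b ≤ n)
    (hmaps : ∀ i, a ≤ i → i ≤ b → a ≤ θ i ∧ θ i ≤ b) : IsMatch a b θ := by
  obtain ⟨-, hinv, hnc⟩ := hθ
  refine ⟨hmaps, fun i hai hib => hinv i (hma.trans hai) (hib.trans hbn), ?_⟩
  rintro ⟨i, j, hai, hij, hjb, hjθ, hθθ⟩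
  exact hnc ⟨i, j, hma.trans hai, hij, hjb.trans hbn, hjθ, hθθ⟩

/-- Otherwise `m < i < θ m < θ i` would cross the pair `(m, θ m)`. -/
theorem apply_le_apply_left {i : ℕ} (hθ : IsMatch m n θ) (hmn : m ≤ n) (hmi : m ≤ i)
    (hi : i ≤ θ m) : θ i ≤ θ m := by
  obtain ⟨hrange, hinv, hnc⟩ := hθ
  have hθm := hrange m le_rfl hmn
  by_contra! hgt
  have hθθm : θ (θ m) = m := hinv m le_rfl hmn
  have him : i ≠ m := by rintro rfl; omega
  have hiθm : i ≠ θ m := by rintro rfl; omega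
  exact hnc ⟨m, i, le_rfl, by omega, by omega, by omega, hgt⟩

theorem apply_left_lt_apply {i : ℕ} (hθ : IsMatch m n θ) (hmn : m ≤ n) (hi : θ m < i)
    (hin : i ≤ n) : θ m < θ i := by
  by_contra! hle
  have hmi : m ≤ i := by have := (hθ.1 m le_rfl hmn).1; omega
  have := hθ.apply_le_apply_left hmn (hθ.1 i hmi hin).1 hle
  rw [hθ.2.1 i hmi hin] at this
  omega

end IsMatch

theorem stmt6_general (l k : ℕ) (θ : ℕ → ℕ) (hθ : IsMatch 0 l θ)
    (h0 : θ 0 = k) (hk : k < l) :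
    IsMatch 0 k θ ∧ IsMatch (k + 1) l θ := by
  subst h0
  exact ⟨hθ.restrict le_rfl hk.le fun i _ hi =>
      ⟨(θ i).zero_le, hθ.apply_le_apply_left l.zero_le i.zero_le hi⟩,
    hθ.restrict (θ 0 + 1).zero_le le_rfl fun i hi hil =>
      ⟨hθ.apply_left_lt_apply l.zero_le hi hil, (hθ.1 i i.zero_le hil).2⟩⟩

/-- if θ is a match on {0,...,l}, l ≥ 1 and θ 0 = k < l, then θ restricted to
{0,...,k} is a match on {0,...,k} and θ restricted to {k+1,...,l} is a match on
{k+1,...,l}. -/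
theorem stmt6 (l k : ℕ) (θ : ℕ → ℕ) (hl : 1 ≤ l) (hθ : IsMatch 0 l θ)
    (h0 : θ 0 = k) (hk : k < l) :
    IsMatch 0 k θ ∧ IsMatch (k + 1) l θ :=
  stmt6_general l k θ hθ h0 hk
end

section
/- Let (X, d) be a metric space with d ≤ 1, extended to X̄ as above, and let δ be the Graev metric on the free group F(X), given for a reduced word w by δ(w, e) = min over matches θ of ρ(w, w^θ), where ρ is the sum of coordinatewise distances. If u ≠ v are elements of F(X) all of whose letters lie in a subset Y ⊆ X that is ε-separated (d(x, y) ≥ ε for all distinct x, y ∈ Y, with ε ≤ 1), then δ(u, v) ≥ ε. -/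
/-!
Let `w` be the reduced form of `u⁻¹ v`: it is nonempty because `u ≠ v`, and its letters come
from `Y`. A non-crossing match `θ` either fixes some `i`, so that `w^θ` has `e` where `w` has a
letter, or has an innermost pair `i ↔ i + 1`, so that `w^θ` has `w_i⁻¹` where `w` has
`w_{i+1} ≠ w_i⁻¹`. Both coordinates lie in the `ε`-separated alphabet `Y ∪ Y⁻¹ ∪ {e}`, so
this one coordinate already contributes at least `ε` to `ρ(w, w^θ)`.
-/

/-- The set X̄ = X ∪ X⁻¹ ∪ {e}: a formal copy `neg x` of each `pos x`, plus a new
neutral letter `e`. -/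
inductive Bar (X : Type*) where
  | pos : X → Bar X
  | neg : X → Bar X
  | e : Bar X
  deriving DecidableEq

/-- Formal inverse on X̄, with e⁻¹ = e. -/
def Bar.inv {X : Type*} : Bar X → Bar X
  | pos x => neg x
  | neg x => pos x
  | e => e

/-- The extension of a metric `d` on `X` to `X̄`: the copy `X⁻¹` is isometric to `X`,
and all distances between distinct types (X, X⁻¹, {e}) equal 1. -/
def barDist {X : Type*} (d : X → X → ℝ) : Bar X → Bar X → ℝ
  | Bar.pos x, Bar.pos y => d x y
  | Bar.neg x, Bar.neg y => d x y
  | Bar.e, Bar.e => 0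
  | _, _ => 1

/-- Words over X̄ (possibly with occurrences of the letter e). -/
abbrev Word (X : Type*) := List (Bar X)

/-- A word is irreducible (reduced) if it has no letter e and no adjacent pair x x⁻¹. -/
def Reduced {X : Type*} (w : Word X) : Prop :=
  (∀ a ∈ w, a ≠ Bar.e) ∧ w.Chain' (fun a b => b ≠ Bar.inv a)

/-- Reduction of a word: successively cancel adjacent inverse pairs and delete e's.
Elements of the free group F(X) are identified with reduced words. -/
def reduceWord {X : Type*} [DecidableEq X] : Word X → Word X
  | [] => []
  | a :: w =>
    match reduceWord w with
    | [] => if a = Bar.e then [] else [a]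
    | b :: t => if a = Bar.e then b :: t else if b = Bar.inv a then t else a :: b :: t

/-- The formal inverse of a word. -/
def wordInv {X : Type*} (w : Word X) : Word X := (w.reverse).map Bar.inv

/-- The word w^θ: `x_i^θ = x_i` if `θ i > i`, `e` if `θ i = i`, and `x_{θ i}⁻¹` if
`θ i < i`. -/
def wordMatch {X : Type*} (θ : ℕ → ℕ) (w : Word X) : Word X :=
  (List.range w.length).map fun i =>
    if i < θ i then w.getD i Bar.e
    else if θ i = i then Bar.e
    else Bar.inv (w.getD (θ i) Bar.e)

/-- ρ(u, v): the sum of the coordinatewise distances between two words. -/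
def rho {X : Type*} (d : X → X → ℝ) (u v : Word X) : ℝ :=
  (List.zipWith (barDist d) u v).sum

/-- The Graev norm of a reduced word w: the infimum (a minimum) over matches θ on
`{0, ..., |w| - 1}` of ρ(w, w^θ). -/
noncomputable def graevNorm {X : Type*} (d : X → X → ℝ) (w : Word X) : ℝ :=
  sInf {r : ℝ | ∃ θ : ℕ → ℕ, IsMatch 0 (w.length - 1) θ ∧ r = rho d w (wordMatch θ w)}

/-- The Graev metric δ on F(X): δ(u, v) = N(u⁻¹ v) where u, v are reduced words. -/
noncomputable def graevDist {X : Type*} [DecidableEq X] (d : X → X → ℝ)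
    (u v : Word X) : ℝ :=
  graevNorm d (reduceWord (wordInv u ++ v))

namespace Bar

variable {X : Type*}

@[simp]
lemma inv_inv (a : Bar X) : a.inv.inv = a := by
  cases a <;> rfl

@[simp]
lemma inv_eq_e_iff {a : Bar X} : a.inv = e ↔ a = e := by
  cases a <;> simp [Bar.inv]

def alphabet (Y : Set X) : Set (Bar X) :=
  {a | a = e ∨ ∃ x ∈ Y, a = pos x ∨ a = neg x}

lemma e_mem_alphabet (Y : Set X) : e ∈ alphabet Y := Or.inl rfl

lemma inv_mem_alphabet {Y : Set X} {a : Bar X} (ha : a ∈ alphabet Y) : a.inv ∈ alphabet Y := by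
  rcases ha with rfl | ⟨x, hx, rfl | rfl⟩
  · exact e_mem_alphabet Y
  · exact Or.inr ⟨x, hx, Or.inr rfl⟩
  · exact Or.inr ⟨x, hx, Or.inl rfl⟩

end Bar

section BarDist

variable {X : Type*} {d : X → X → ℝ}

lemma barDist_nonneg (hd : ∀ x y, 0 ≤ d x y) (a b : Bar X) : 0 ≤ barDist d a b := by
  cases a <;> cases b <;> first | exact hd _ _ | norm_num [barDist]

lemma le_barDist_of_mem_alphabet {Y : Set X} {ε : ℝ} (hε1 : ε ≤ 1)
    (hsep : ∀ x ∈ Y, ∀ y ∈ Y, x ≠ y → ε ≤ d x y) {a b : Bar X}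
    (ha : a ∈ Bar.alphabet Y) (hb : b ∈ Bar.alphabet Y) (hab : a ≠ b) : ε ≤ barDist d a b := by
  rcases ha with rfl | ⟨x, hx, rfl | rfl⟩ <;> rcases hb with rfl | ⟨y, hy, rfl | rfl⟩ <;>
    first
    | exact absurd rfl hab
    | exact hε1
    | exact hsep x hx y hy (by rintro rfl; exact hab rfl)

lemma barDist_getElem_le_rho (hd : ∀ x y, 0 ≤ d x y) (w w' : Word X) (i : ℕ)
    (hi : i < w.length) (hi' : i < w'.length) : barDist d w[i] w'[i] ≤ rho d w w' := by
  have hnonneg : ∀ r ∈ List.zipWith (barDist d) w w', 0 ≤ r := by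
    intro r hr
    obtain ⟨j, hj, rfl⟩ := List.mem_iff_getElem.mp hr
    rw [List.getElem_zipWith]
    exact barDist_nonneg hd _ _
  have hterm : (List.zipWith (barDist d) w w')[i]'(by simp [hi, hi']) = barDist d w[i] w'[i] :=
    List.getElem_zipWith ..
  exact hterm ▸ List.single_le_sum hnonneg _ (List.getElem_mem _)

end BarDist

section Reduced

variable {X : Type*}

lemma Reduced.tail {a : Bar X} {w : Word X} (h : Reduced (a :: w)) : Reduced w :=
  ⟨fun c hc => h.1 c (List.mem_cons_of_mem a hc), h.2.tail⟩

lemma reduced_cons_cons {a b : Bar X} {w : Word X} :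
    Reduced (a :: b :: w) ↔ a ≠ Bar.e ∧ b ≠ a.inv ∧ Reduced (b :: w) := by
  constructor
  · intro h
    exact ⟨h.1 a List.mem_cons_self, (List.isChain_cons_cons.mp h.2).1, h.tail⟩
  · rintro ⟨ha, hab, hb, hch⟩
    exact ⟨List.forall_mem_cons.mpr ⟨ha, hb⟩, List.isChain_cons_cons.mpr ⟨hab, hch⟩⟩

end Reduced

section ReduceWord

variable {X : Type*} [DecidableEq X]

lemma reduceWord_sublist (w : Word X) : (reduceWord w).Sublist w := by
  induction w with
  | nil => exact List.Sublist.refl _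
  | cons a w ih =>
    rw [reduceWord]
    rcases h : reduceWord w with _ | ⟨b, t⟩ <;> rw [h] at ih <;> dsimp only <;> split_ifs
    · exact List.nil_sublist _
    · exact List.singleton_sublist.mpr List.mem_cons_self
    · exact ih.cons a
    · exact ((List.sublist_cons_self b t).trans ih).cons a
    · exact ih.cons_cons a

lemma reduced_reduceWord (w : Word X) : Reduced (reduceWord w) := by
  induction w with
  | nil => exact ⟨by simp [reduceWord], List.isChain_nil⟩
  | cons a w ih =>
    rw [reduceWord]
    rcases h : reduceWord w with _ | ⟨b, t⟩ <;> rw [h] at ih <;> dsimp only <;> split_ifs with ha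
    · exact ⟨by simp, List.isChain_nil⟩
    · exact ⟨by simpa using ha, List.isChain_singleton _⟩
    · exact ih
    · exact ih.tail
    · exact reduced_cons_cons.mpr ⟨ha, ‹_›, ih⟩

lemma reduceWord_eq_self {w : Word X} (hw : Reduced w) : reduceWord w = w := by
  induction w with
  | nil => rfl
  | cons a w ih =>
    have ha : a ≠ Bar.e := hw.1 a List.mem_cons_self
    rw [reduceWord, ih hw.tail]
    rcases w with _ | ⟨b, t⟩
    · simp [ha]
    · simp [ha, (reduced_cons_cons.mp hw).2.1]

lemma reduceWord_append (w w' : Word X) :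
    reduceWord (w ++ w') = reduceWord (w ++ reduceWord w') := by
  induction w with
  | nil => exact (reduceWord_eq_self (reduced_reduceWord w')).symm
  | cons a w ih => simp only [List.cons_append, reduceWord, ih]

lemma reduceWord_inv_cons_cons {a : Bar X} {w : Word X} (hw : Reduced (a :: w)) :
    reduceWord (a.inv :: a :: w) = w := by
  have ha : a ≠ Bar.e := hw.1 a List.mem_cons_self
  rw [reduceWord, reduceWord_eq_self hw]
  simp [ha]

lemma eq_of_reduceWord_wordInv_append_eq_nil {u v : Word X} (hu : Reduced u) (hv : Reduced v)
    (h : reduceWord (wordInv u ++ v) = []) : u = v := by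
  induction u generalizing v with
  | nil => simpa [wordInv, reduceWord_eq_self hv] using h.symm
  | cons a u ih =>
    have hsplit : wordInv (a :: u) ++ v = wordInv u ++ (a.inv :: v) := by simp [wordInv]
    rw [hsplit, reduceWord_append] at h
    by_cases hcancel : ∃ t, v = a :: t
    · obtain ⟨t, rfl⟩ := hcancel
      rw [reduceWord_inv_cons_cons hv] at h
      rw [ih hu.tail hv.tail h]
    · -- otherwise `a⁻¹ :: v` is reduced and `u` would have to start with `a⁻¹`
      have hav : Reduced (a.inv :: v) := by
        rcases v with _ | ⟨b, t⟩
        · exact ⟨by simpa using hu.1 a List.mem_cons_self, List.isChain_singleton _⟩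
        · refine reduced_cons_cons.mpr ⟨by simpa using hu.1 a List.mem_cons_self, ?_, hv⟩
          rintro rfl
          exact hcancel ⟨t, by simp⟩
      rw [reduceWord_eq_self hav] at h
      have := ih hu.tail hav h
      subst this
      exact absurd rfl (reduced_cons_cons.mp hu).2.1

end ReduceWord

section Match

lemma isMatch_id (m n : ℕ) : IsMatch m n id :=
  ⟨fun _ hm hn => ⟨hm, hn⟩, fun _ _ _ => rfl, fun ⟨_, _, _, hij, _, hji, _⟩ => by
    simp only [id] at hji; omega⟩

lemma IsMatch.exists_fixed_or_adjacent {m n : ℕ} {θ : ℕ → ℕ} (hθ : IsMatch m n θ)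
    (hmn : m ≤ n) : ∃ i, m ≤ i ∧ i ≤ n ∧ (θ i = i ∨ θ i = i + 1) := by
  obtain ⟨hrange, hinv, hcross⟩ := hθ
  by_contra! hnone
  -- among the pairs `i < θ i = i + g + 1` one with minimal `g` is adjacent
  suffices h : ∀ g i, m ≤ i → θ i ≤ n → θ i = i + g + 1 → False by
    have := (hrange m le_rfl hmn).2
    have := hnone m le_rfl hmn
    have hθm := (hrange m le_rfl hmn).1
    exact h (θ m - m - 1) m le_rfl (by omega) (by omega)
  intro g
  induction g using Nat.strong_induction_on with
  | _ g ih =>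
    intro i hmi hθin hθi
    have hg : θ i ≠ i + 1 := (hnone i hmi (by omega)).2
    have hj : i + 1 ≤ n := by omega
    obtain ⟨hmk, hkn⟩ := hrange (i + 1) (by omega) hj
    have hkj := hinv (i + 1) (by omega) hj
    have hθii := hinv i hmi (by omega)
    have hki := (hnone (i + 1) (by omega) hj).1
    rcases Nat.lt_or_ge (θ (i + 1)) (θ i) with hlt | hge
    · rcases Nat.lt_or_ge (θ (i + 1)) i with hk | hk
      · exact hcross ⟨θ (i + 1), i, hmk, hk, by omega, by omega, by omega⟩
      · have : θ (i + 1) ≠ i := fun h => by rw [h] at hkj; omega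
        exact ih (θ (i + 1) - (i + 1) - 1) (by omega) (i + 1) (by omega) hkn (by omega)
    · have : θ (i + 1) ≠ θ i := fun h => by rw [h, hθii] at hkj; omega
      exact hcross ⟨i, i + 1, hmi, by omega, hj, by omega, by omega⟩

end Match

section WordMatch

variable {X : Type*}

lemma wordMatch_length (θ : ℕ → ℕ) (w : Word X) : (wordMatch θ w).length = w.length := by
  simp [wordMatch]

lemma getElem_wordMatch (θ : ℕ → ℕ) (w : Word X) (i : ℕ) (hi : i < (wordMatch θ w).length) :
    (wordMatch θ w)[i] =
      if i < θ i then w.getD i Bar.e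
      else if θ i = i then Bar.e
      else (w.getD (θ i) Bar.e).inv := by
  simp [wordMatch]

lemma mem_of_mem_wordMatch {S : Set (Bar X)} (heS : Bar.e ∈ S) (hinvS : ∀ a ∈ S, a.inv ∈ S)
    {θ : ℕ → ℕ} {w : Word X} (hw : ∀ a ∈ w, a ∈ S) {a : Bar X} (ha : a ∈ wordMatch θ w) :
    a ∈ S := by
  have hgetD : ∀ j, w.getD j Bar.e ∈ S := fun j => by
    rw [List.getD_eq_getElem?_getD]
    cases h : w[j]? with
    | none => exact heS
    | some b => exact hw b (List.mem_of_getElem? h)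
  obtain ⟨i, hi, rfl⟩ := List.mem_iff_getElem.mp ha
  rw [getElem_wordMatch]
  split_ifs
  exacts [hgetD i, heS, hinvS _ (hgetD _)]

/-- At a fixed point of `θ` the word `w^θ` has `e`; at an innermost pair `i ↔ i + 1` it has
`w_i⁻¹`, which differs from `w_{i+1}` because `w` is reduced. -/
lemma Reduced.exists_getElem_ne_wordMatch {w : Word X} (hw : Reduced w) (hne : w ≠ [])
    {θ : ℕ → ℕ} (hθ : IsMatch 0 (w.length - 1) θ) :
    ∃ i, ∃ hi : i < w.length, w[i] ≠ (wordMatch θ w)[i]'(by rwa [wordMatch_length]) := by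
  have hlen := List.length_pos_iff.mpr hne
  obtain ⟨i, -, hin, hfix | hadj⟩ := hθ.exists_fixed_or_adjacent (Nat.zero_le _)
  · refine ⟨i, by omega, ?_⟩
    rw [getElem_wordMatch, if_neg (by omega), if_pos hfix]
    exact hw.1 _ (List.getElem_mem _)
  · have hi1 : i + 1 < w.length := by
      have := (hθ.1 i (Nat.zero_le _) hin).2
      omega
    have hback : θ (i + 1) = i := by rw [← hadj]; exact hθ.2.1 i (Nat.zero_le _) hin
    refine ⟨i + 1, hi1, ?_⟩
    rw [getElem_wordMatch, if_neg (by omega), if_neg (by omega), hback,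
      List.getD_eq_getElem _ _ (by omega)]
    simpa using List.isChain_iff_getElem.mp hw.2 i hi1

end WordMatch

theorem stmt8_general {X : Type*} [DecidableEq X] (d : X → X → ℝ)
    (hrefl : ∀ x, d x x = 0)
    (hsymm : ∀ x y, d x y = d y x) (htri : ∀ x y z, d x z ≤ d x y + d y z)
    (Y : Set X) (ε : ℝ) (hε1 : ε ≤ 1)
    (hsep : ∀ x ∈ Y, ∀ y ∈ Y, x ≠ y → ε ≤ d x y)
    (u v : Word X) (hu : Reduced u) (hv : Reduced v)
    (hulet : ∀ a ∈ u, ∃ x ∈ Y, a = Bar.pos x ∨ a = Bar.neg x)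
    (hvlet : ∀ a ∈ v, ∃ x ∈ Y, a = Bar.pos x ∨ a = Bar.neg x)
    (huv : u ≠ v) :
    ε ≤ graevDist d u v := by
  have hd : ∀ x y, 0 ≤ d x y := fun x y => by
    linarith [htri x y x, hrefl x, hsymm x y]
  set w := reduceWord (wordInv u ++ v)
  have hw : Reduced w := reduced_reduceWord _
  have hwne : w ≠ [] := fun h => huv (eq_of_reduceWord_wordInv_append_eq_nil hu hv h)
  have hwY : ∀ a ∈ w, a ∈ Bar.alphabet Y := by
    intro a ha
    rcases List.mem_append.mp ((reduceWord_sublist _).subset ha) with ha | ha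
    · obtain ⟨b, hb, rfl⟩ := List.mem_map.mp ha
      exact Bar.inv_mem_alphabet (Or.inr (hulet b (List.mem_reverse.mp hb)))
    · exact Or.inr (hvlet a ha)
  refine le_csInf ⟨_, id, isMatch_id _ _, rfl⟩ ?_
  rintro r ⟨θ, hθ, rfl⟩
  obtain ⟨i, hi, hdiff⟩ := hw.exists_getElem_ne_wordMatch hwne hθ
  have hiθ : i < (wordMatch θ w).length := by rwa [wordMatch_length]
  calc ε ≤ barDist d w[i] (wordMatch θ w)[i] :=
        le_barDist_of_mem_alphabet hε1 hsep (hwY _ (List.getElem_mem _))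
          (mem_of_mem_wordMatch (Bar.e_mem_alphabet Y) (fun _ => Bar.inv_mem_alphabet) hwY
            (List.getElem_mem _)) hdiff
    _ ≤ rho d w (wordMatch θ w) := barDist_getElem_le_rho hd w _ i hi hiθ

/-- if u ≠ v are elements of F(X) (reduced words) all of whose letters lie
in an ε-separated subset Y of X (with ε ≤ 1), then δ(u, v) ≥ ε for the Graev metric δ. -/
theorem stmt8 {X : Type*} [DecidableEq X] (d : X → X → ℝ)
    (hrefl : ∀ x, d x x = 0) (heq : ∀ x y, d x y = 0 → x = y)
    (hsymm : ∀ x y, d x y = d y x) (htri : ∀ x y z, d x z ≤ d x y + d y z)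
    (hbd : ∀ x y, d x y ≤ 1)
    (Y : Set X) (ε : ℝ) (hε : 0 < ε) (hε1 : ε ≤ 1)
    (hsep : ∀ x ∈ Y, ∀ y ∈ Y, x ≠ y → ε ≤ d x y)
    (u v : Word X) (hu : Reduced u) (hv : Reduced v)
    (hulet : ∀ a ∈ u, ∃ x ∈ Y, a = Bar.pos x ∨ a = Bar.neg x)
    (hvlet : ∀ a ∈ v, ∃ x ∈ Y, a = Bar.pos x ∨ a = Bar.neg x)
    (huv : u ≠ v) :
    ε ≤ graevDist d u v :=
  stmt8_general d hrefl hsymm htri Y ε hε1 hsep u v hu hv hulet hvlet huv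
end

section
/- Let G be a Polish group with a dense subgroup D = ⋃_n D_n which is an increasing union of subgroups D_n, and suppose for each n there is a continuous homomorphism f_n : G → D_n (where D_n carries a topology making it a topological group and a closed subset of G) such that f_n restricted to D_n is the identity and each f_n is 1-Lipschitz with respect to a fixed compatible metric d on G (also inducing the metric on D_n). Then the map g ↦ (f_n(g))_n is a continuous injective homomorphism of G into ∏_n D_n. -/
/-!
A 1-Lipschitz map fixing a point `s` moves every `x` by at most `2 d(x, s)`. Since the `D n`
increase and their union is dense, this forces `f n g → g` for every `g`, so `g` is recovered
from the sequence `(f n g)_n` and the map `g ↦ (f n g)_n` is injective.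
-/

open Filter Topology

theorem LipschitzWith.dist_apply_self_le_of_apply_eq {X : Type*} [PseudoMetricSpace X]
    {f : X → X} (hf : LipschitzWith 1 f) {s : X} (hs : f s = s) (x : X) :
    dist (f x) x ≤ 2 * dist x s :=
  calc dist (f x) x ≤ dist (f x) (f s) + dist s x := by simpa only [hs] using dist_triangle _ s x
    _ ≤ dist x s + dist x s := by
        gcongr
        · simpa using hf.dist_le_mul x s
        · exact (dist_comm s x).le
    _ = 2 * dist x s := by ring

section FixingDenseUnion

variable {ι X : Type*} {S : ι → Set X} {f : ι → X → X}

theorem tendsto_apply_of_lipschitzWith_one_of_fixes_dense_iUnion [PseudoMetricSpace X]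
    [Preorder ι] (hS : Monotone S) (hdense : Dense (⋃ i, S i))
    (hlip : ∀ i, LipschitzWith 1 (f i))
    (hfix : ∀ i, ∀ s ∈ S i, f i s = s) (x : X) :
    Tendsto (fun i => f i x) atTop (𝓝 x) := by
  refine Metric.tendsto_nhds.2 fun ε hε => ?_
  obtain ⟨s, hxs, hs⟩ := Metric.dense_iff.1 hdense x (ε / 2) (half_pos hε)
  obtain ⟨j, hsj⟩ := Set.mem_iUnion.1 hs
  filter_upwards [eventually_ge_atTop j] with i hji
  calc dist (f i x) x ≤ 2 * dist x s :=
        (hlip i).dist_apply_self_le_of_apply_eq (hfix i s (hS hji hsj)) x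
    _ < ε := by linarith [Metric.mem_ball'.1 hxs, dist_comm x s]

theorem injective_pi_of_lipschitzWith_one_of_fixes_dense_iUnion [MetricSpace X]
    [SemilatticeSup ι] [Nonempty ι] (hS : Monotone S) (hdense : Dense (⋃ i, S i))
    (hlip : ∀ i, LipschitzWith 1 (f i)) (hfix : ∀ i, ∀ s ∈ S i, f i s = s) :
    Function.Injective fun x i => f i x := by
  intro x y (hxy : (fun i => f i x) = fun i => f i y)
  have hlim := tendsto_apply_of_lipschitzWith_one_of_fixes_dense_iUnion hS hdense hlip hfix
  have hx := hlim x
  rw [hxy] at hx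
  exact tendsto_nhds_unique hx (hlim y)

end FixingDenseUnion

theorem stmt19_general {G : Type*} [Group G] [MetricSpace G]
    (D : ℕ → Subgroup G) (hmono : Monotone D)
    (hdense : Dense (⋃ n, (D n : Set G)))
    (f : ∀ n : ℕ, G →* G) (hcont : ∀ n, Continuous (f n))
    (hrange : ∀ n g, f n g ∈ D n)
    (hid : ∀ n, ∀ g ∈ D n, f n g = g)
    (hlip : ∀ n g h, dist (f n g) (f n h) ≤ dist g h) :
    Continuous (fun (g : G) (n : ℕ) => (⟨f n g, hrange n g⟩ : D n)) ∧
    Function.Injective (fun (g : G) (n : ℕ) => (⟨f n g, hrange n g⟩ : D n)) ∧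
    (fun n => (⟨f n (1 : G), hrange n 1⟩ : D n)) = (1 : ∀ n, D n) ∧
    (∀ g h : G, (fun n => (⟨f n (g * h), hrange n (g * h)⟩ : D n)) =
      (fun n => (⟨f n g, hrange n g⟩ : D n)) * (fun n => (⟨f n h, hrange n h⟩ : D n))) := by
  let φ : G →* ∀ n, D n := MonoidHom.pi fun n => (f n).codRestrict (D n) (hrange n)
  have hinj : Function.Injective fun g n => f n g :=
    injective_pi_of_lipschitzWith_one_of_fixes_dense_iUnion (fun _ _ hmn => hmono hmn) hdense
      (fun n => LipschitzWith.mk_one (hlip n)) hid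
  exact ⟨continuous_pi fun n => (hcont n).subtype_mk _,
    Function.Injective.of_comp (f := fun p n => (p n : G)) hinj, φ.map_one, φ.map_mul⟩

/-- let G be a Polish group with compatible metric d, and D_n an increasing
sequence of subgroups whose union is dense, with each D_n closed in G. Suppose for each n
there is a continuous homomorphism f_n : G → G with range contained in D_n, restricting
to the identity on D_n, and 1-Lipschitz with respect to d. Then g ↦ (f_n(g))_n is a
continuous injective homomorphism of G into ∏_n D_n. -/
theorem stmt19 {G : Type*} [Group G] [MetricSpace G] [IsTopologicalGroup G] [PolishSpace G]
    (D : ℕ → Subgroup G) (hmono : Monotone D)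
    (hclosed : ∀ n, IsClosed (D n : Set G))
    (hdense : Dense (⋃ n, (D n : Set G)))
    (f : ∀ n : ℕ, G →* G) (hcont : ∀ n, Continuous (f n))
    (hrange : ∀ n g, f n g ∈ D n)
    (hid : ∀ n, ∀ g ∈ D n, f n g = g)
    (hlip : ∀ n g h, dist (f n g) (f n h) ≤ dist g h) :
    Continuous (fun (g : G) (n : ℕ) => (⟨f n g, hrange n g⟩ : D n)) ∧
    Function.Injective (fun (g : G) (n : ℕ) => (⟨f n g, hrange n g⟩ : D n)) ∧
    (fun n => (⟨f n (1 : G), hrange n 1⟩ : D n)) = (1 : ∀ n, D n) ∧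
    (∀ g h : G, (fun n => (⟨f n (g * h), hrange n (g * h)⟩ : D n)) =
      (fun n => (⟨f n g, hrange n g⟩ : D n)) * (fun n => (⟨f n h, hrange n h⟩ : D n))) :=
  stmt19_general D hmono hdense f hcont hrange hid hlip
end
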